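/- (Lemma 3.14: reflective equation for the A-type Jackson integral.) With Ī the dual Jackson integral of A-type as in the context, suppose |q·a₁⁻¹b₁⁻¹| < |q^α t^{2i−2}| < 1 for i=1,…,n, and let x∈(ℂ∖{0})ⁿ be such that both I(x) and Ī(x⁻¹) have well-defined summands and converge absolutely, where x⁻¹ := (x₁⁻¹,…,xₙ⁻¹) and the branch values of powers of x_i⁻¹ are taken to be (x_i⁻¹)^c := x_i^{−c}. Then I(x) = (−1)^{n(n−1)/2} · ∏_{i=1}^n x_i^{1−α₁−β₁} · θ(q·a₁⁻¹x_i)/θ(b₁x_i) · ∏_{1≤j<k≤n} x_j^{2τ−1}·x_k^{1−2τ} · θ(q·t⁻¹x_k/x_j)/θ(t·x_k/x_j) · Ī(x⁻¹). -/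

import Mathlib

open scoped BigOperators

/-- `q^c := exp(c · log q)` with the real branch of `log q`. -/
noncomputable def qpow (q : ℝ) (c : ℂ) : ℂ := Complex.exp (c * (Real.log q : ℂ))

/-- `(a)_∞ := ∏_{i=0}^∞ (1 - q^i a)`. -/
noncomputable def poch (q : ℝ) (a : ℂ) : ℂ := ∏' i : ℕ, (1 - (q : ℂ) ^ i * a)

/-- `θ(a) := (a)_∞ (q/a)_∞`. -/
noncomputable def qtheta (q : ℝ) (a : ℂ) : ℂ := poch q a * poch q ((q : ℂ) / a)

/-- The summand `Ψ_x(ν)` of the Jackson integral of A-type; the base point `x` is given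
through branch logarithms `l` (so `x i = exp (l i)` and the branch `x i ^ c = exp (c * l i)`). -/
noncomputable def Apsi (q : ℝ) (n : ℕ) (α τ a₁ b₁ : ℂ) (l : Fin n → ℂ) (ν : Fin n → ℤ) : ℂ :=
  (∏ i : Fin n,
      Complex.exp (α * l i) * qpow q α ^ ν i *
        (poch q ((q : ℂ) * a₁⁻¹ * (Complex.exp (l i) * (q : ℂ) ^ ν i)) /
          poch q (b₁ * (Complex.exp (l i) * (q : ℂ) ^ ν i)))) *
  (∏ i : Fin n, ∏ j ∈ Finset.Ioi i,
      Complex.exp ((2 * τ - 1) * l i) * qpow q (2 * τ - 1) ^ ν i *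
        (poch q (qpow q (1 - τ) *
            (Complex.exp (l j) * (q : ℂ) ^ ν j / (Complex.exp (l i) * (q : ℂ) ^ ν i))) /
          poch q (qpow q τ *
            (Complex.exp (l j) * (q : ℂ) ^ ν j / (Complex.exp (l i) * (q : ℂ) ^ ν i))))) *
  (∏ i : Fin n, ∏ j ∈ Finset.Ioi i,
      (Complex.exp (l i) * (q : ℂ) ^ ν i - Complex.exp (l j) * (q : ℂ) ^ ν j))

/-- The Jackson integral of A-type `I(x) = (1-q)^n Σ_{ν ∈ ℤⁿ} Ψ_x(ν)`. -/
noncomputable def AInt (q : ℝ) (n : ℕ) (α τ a₁ b₁ : ℂ) (l : Fin n → ℂ) : ℂ :=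
  ((1 : ℂ) - (q : ℂ)) ^ n * ∑' ν : Fin n → ℤ, Apsi q n α τ a₁ b₁ l ν

/-- All summands of `I(x)` are well defined: no vanishing denominators. -/
def AWellDef (q : ℝ) (n : ℕ) (τ b₁ : ℂ) (l : Fin n → ℂ) : Prop :=
  ∀ ν : Fin n → ℤ,
    (∀ i : Fin n, poch q (b₁ * (Complex.exp (l i) * (q : ℂ) ^ ν i)) ≠ 0) ∧
    (∀ i j : Fin n, i < j →
      poch q (qpow q τ *
        (Complex.exp (l j) * (q : ℂ) ^ ν j / (Complex.exp (l i) * (q : ℂ) ^ ν i))) ≠ 0)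

/-!
The identity holds summand by summand: `Ψ_x(ν)` is the displayed prefactor times
`Ψ̄_{x⁻¹}(-ν)`, and summing over `ν ↦ -ν` gives the theorem. For a factor
`(q a⁻¹ y)_∞ / (b y)_∞` with `y = x q^ν`, completing numerator and denominator to
`θ(q a⁻¹ y) / θ(b y)` leaves the dual factor `(q b⁻¹ y⁻¹)_∞ / (a y⁻¹)_∞`, and the
quasi-periodicity `θ(q z) = -z⁻¹ θ(z)` moves the `θ`-quotient from `y` back to `x` at the cost
of `(a b / q)^ν`. The powers of `x_i q^{ν_i}` left over from the single and the pair factors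
cancel because `∏_{i<j} g_i g_j = ∏_i g_i^{n-1}`.
-/

section

variable {q : ℝ}

lemma summable_norm_pow_mul (hq : |q| < 1) (a : ℂ) :
    Summable fun k : ℕ => ‖(q : ℂ) ^ k * a‖ := by
  simpa [norm_mul, norm_pow] using
    (summable_geometric_of_lt_one (abs_nonneg q) hq).mul_right ‖a‖

lemma multipliable_one_sub_pow_mul (hq : |q| < 1) (a : ℂ) :
    Multipliable fun k : ℕ => 1 - (q : ℂ) ^ k * a := by
  simp_rw [sub_eq_add_neg]
  exact multipliable_one_add_of_summable (by simpa using summable_norm_pow_mul hq a)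

lemma poch_eq_one_sub_mul_poch (hq : |q| < 1) (a : ℂ) :
    poch q a = (1 - a) * poch q ((q : ℂ) * a) := by
  have hshift : (fun k : ℕ => 1 - (q : ℂ) ^ (k + 1) * a) =
      fun k : ℕ => 1 - (q : ℂ) ^ k * ((q : ℂ) * a) := by
    funext k; rw [pow_succ]; ring
  have hm : Multipliable fun k : ℕ => 1 - (q : ℂ) ^ (k + 1) * a := by
    rw [hshift]; exact multipliable_one_sub_pow_mul hq _
  rw [poch, poch, tprod_eq_zero_mul' (f := fun k : ℕ => 1 - (q : ℂ) ^ k * a) hm, hshift,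
    pow_zero, one_mul]

lemma poch_ne_zero (hq : |q| < 1) {a : ℂ} (h : ∀ k : ℕ, (q : ℂ) ^ k * a ≠ 1) :
    poch q a ≠ 0 := by
  simpa [poch, sub_eq_add_neg] using tprod_one_add_ne_zero_of_summable
    (f := fun k : ℕ => -((q : ℂ) ^ k * a))
    (fun k => by rw [← sub_eq_add_neg, sub_ne_zero]; exact (h k).symm)
    (by simpa using summable_norm_pow_mul hq a)

lemma poch_eq_zero_of_pow_mul_eq_one (hq : |q| < 1) {a : ℂ} {k : ℕ}
    (h : (q : ℂ) ^ k * a = 1) : poch q a = 0 := by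
  induction k generalizing a with
  | zero => rw [poch_eq_one_sub_mul_poch hq, ← h]; simp
  | succ k ih =>
    rw [poch_eq_one_sub_mul_poch hq, ih (by rw [← h, pow_succ]; ring), mul_zero]

lemma qtheta_q_mul (hq : |q| < 1) (hq0 : q ≠ 0) {a : ℂ} (ha : a ≠ 0) :
    qtheta q ((q : ℂ) * a) = -a⁻¹ * qtheta q a := by
  have hqc : (q : ℂ) ≠ 0 := by exact_mod_cast hq0
  rw [qtheta, qtheta, div_mul_cancel_left₀ hqc, poch_eq_one_sub_mul_poch hq a,
    poch_eq_one_sub_mul_poch hq a⁻¹, div_eq_mul_inv]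
  field_simp
  ring

lemma qtheta_zpow_add_one_mul (hq : |q| < 1) (hq0 : q ≠ 0) {u : ℂ} (hu : u ≠ 0) (ν : ℤ) :
    qtheta q ((q : ℂ) ^ (ν + 1) * u) * u ^ (ν + 1) =
      -((q : ℂ) ^ ν)⁻¹ * (qtheta q ((q : ℂ) ^ ν * u) * u ^ ν) := by
  have hqν : (q : ℂ) ^ ν ≠ 0 := zpow_ne_zero _ (by exact_mod_cast hq0)
  rw [zpow_add_one₀ (by exact_mod_cast hq0), mul_comm _ (q : ℂ), mul_assoc,
    qtheta_q_mul hq hq0 (mul_ne_zero hqν hu), zpow_add_one₀ hu]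
  field_simp

/-- `θ(q^ν u) / θ(q^ν v) = (v / u)^ν θ(u) / θ(v)`, cross-multiplied so that no
nonvanishing of `θ` is needed. -/
lemma qtheta_zpow_mul_cross (hq : |q| < 1) (hq0 : q ≠ 0) {u v : ℂ} (hu : u ≠ 0) (hv : v ≠ 0)
    (ν : ℤ) :
    qtheta q ((q : ℂ) ^ ν * u) * u ^ ν * qtheta q v =
      qtheta q ((q : ℂ) ^ ν * v) * v ^ ν * qtheta q u := by
  induction ν using Int.induction_on with
  | zero => simp only [zpow_zero, one_mul]; ring
  | succ k ih =>
    rw [qtheta_zpow_add_one_mul hq hq0 hu, qtheta_zpow_add_one_mul hq hq0 hv]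
    linear_combination -((q : ℂ) ^ (k : ℤ))⁻¹ * ih
  | pred k ih =>
    have hqk : -((q : ℂ) ^ (-(k : ℤ) - 1))⁻¹ ≠ 0 :=
      neg_ne_zero.mpr (inv_ne_zero (zpow_ne_zero _ (by exact_mod_cast hq0)))
    rw [← sub_add_cancel (-(k : ℤ)) 1, qtheta_zpow_add_one_mul hq hq0 hu,
      qtheta_zpow_add_one_mul hq hq0 hv] at ih
    refine mul_left_cancel₀ hqk ?_
    linear_combination ih

lemma qtheta_ne_zero (hq : |q| < 1) {v : ℂ} (h : ∀ μ : ℤ, poch q ((q : ℂ) ^ μ * v) ≠ 0) :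
    qtheta q v ≠ 0 := by
  refine mul_ne_zero (by simpa using h 0) (poch_ne_zero hq fun k hk => ?_)
  refine h (-(k + 1 : ℕ)) (poch_eq_zero_of_pow_mul_eq_one hq (k := 0) ?_)
  have hv : v ≠ 0 := by rintro rfl; simp at hk
  rw [mul_div_assoc', div_eq_one_iff_eq hv, ← pow_succ] at hk
  rw [pow_zero, one_mul, zpow_neg, zpow_natCast, hk, inv_mul_cancel₀ hv]

lemma poch_div_poch_eq_reflect (hq : |q| < 1) (hq0 : q ≠ 0) {a b X : ℂ} (ha : a ≠ 0)
    (hb : b ≠ 0) (hX : X ≠ 0) (ν : ℤ) (hbX : ∀ μ : ℤ, poch q (b * (X * (q : ℂ) ^ μ)) ≠ 0)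
    (haX : poch q (a * (X * (q : ℂ) ^ ν)⁻¹) ≠ 0) :
    poch q ((q : ℂ) * a⁻¹ * (X * (q : ℂ) ^ ν)) / poch q (b * (X * (q : ℂ) ^ ν)) =
      (a * b / q) ^ ν * (qtheta q ((q : ℂ) * a⁻¹ * X) / qtheta q (b * X)) *
        (poch q ((q : ℂ) * b⁻¹ * (X * (q : ℂ) ^ ν)⁻¹) / poch q (a * (X * (q : ℂ) ^ ν)⁻¹)) := by
  have hqc : (q : ℂ) ≠ 0 := by exact_mod_cast hq0
  have hu : (q : ℂ) * a⁻¹ * X ≠ 0 := by simp [ha, hX, hqc]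
  have hv : b * X ≠ 0 := mul_ne_zero hb hX
  have hθu : qtheta q ((q : ℂ) ^ ν * ((q : ℂ) * a⁻¹ * X)) =
      poch q ((q : ℂ) * a⁻¹ * (X * (q : ℂ) ^ ν)) * poch q (a * (X * (q : ℂ) ^ ν)⁻¹) := by
    rw [qtheta]; congr 2 <;> field_simp
  have hθv : qtheta q ((q : ℂ) ^ ν * (b * X)) =
      poch q (b * (X * (q : ℂ) ^ ν)) * poch q ((q : ℂ) * b⁻¹ * (X * (q : ℂ) ^ ν)⁻¹) := by
    rw [qtheta]; congr 2 <;> field_simp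
  have hθ : qtheta q (b * X) ≠ 0 :=
    qtheta_ne_zero hq fun μ => by convert hbX μ using 2; ring
  have hvu : (b * X) ^ ν = (a * b / q) ^ ν * ((q : ℂ) * a⁻¹ * X) ^ ν := by
    rw [← mul_zpow]; congr 1; field_simp
  have cross := qtheta_zpow_mul_cross hq hq0 hu hv ν
  rw [hθu, hθv, hvu] at cross
  have huν : ((q : ℂ) * a⁻¹ * X) ^ ν ≠ 0 := zpow_ne_zero _ hu
  have solve : ∀ P₁ P₂ P₃ P₄ W Θu Θv U : ℂ, P₂ ≠ 0 → P₄ ≠ 0 → Θv ≠ 0 → U ≠ 0 →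
      P₁ * P₄ * U * Θv = P₂ * P₃ * (W * U) * Θu → P₁ / P₂ = W * (Θu / Θv) * (P₃ / P₄) := by
    intro P₁ P₂ P₃ P₄ W Θu Θv U h₂ h₄ hΘ hU h
    field_simp
    refine mul_right_cancel₀ hU ?_
    linear_combination h
  exact solve _ _ _ _ _ _ _ _ (hbX ν) haX hθ huν cross

lemma qpow_add (c d : ℂ) : qpow q (c + d) = qpow q c * qpow q d := by
  rw [qpow, qpow, qpow, add_mul, Complex.exp_add]

lemma qpow_ne_zero (c : ℂ) : qpow q c ≠ 0 := Complex.exp_ne_zero _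

lemma qpow_one (hq0 : 0 < q) : qpow q 1 = q := by
  rw [qpow, one_mul, ← Complex.ofReal_exp, Real.exp_log hq0]

lemma qpow_sub_one (hq0 : 0 < q) (c : ℂ) : qpow q (c - 1) = qpow q c / q := by
  rw [eq_div_iff (by exact_mod_cast hq0.ne'), ← qpow_one hq0, ← qpow_add, sub_add_cancel]

/-- `shiftedPow q c L k` is the branch of `(x q^k)^c` for `x = exp L`. -/
noncomputable def shiftedPow (q : ℝ) (c L : ℂ) (k : ℤ) : ℂ :=
  Complex.exp (c * L) * qpow q c ^ k

lemma shiftedPow_ne_zero (c L : ℂ) (k : ℤ) : shiftedPow q c L k ≠ 0 :=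
  mul_ne_zero (Complex.exp_ne_zero _) (zpow_ne_zero _ (qpow_ne_zero _))

lemma shiftedPow_add (c d L : ℂ) (k : ℤ) :
    shiftedPow q (c + d) L k = shiftedPow q c L k * shiftedPow q d L k := by
  simp only [shiftedPow, add_mul, Complex.exp_add, qpow_add, mul_zpow]
  ring

lemma shiftedPow_natCast_mul (m : ℕ) (c L : ℂ) (k : ℤ) :
    shiftedPow q (m * c) L k = shiftedPow q c L k ^ m := by
  induction m with
  | zero => simp [shiftedPow, qpow]
  | succ m ih => rw [Nat.cast_succ, add_one_mul, shiftedPow_add, ih, pow_succ]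

lemma shiftedPow_neg_neg (c L : ℂ) (k : ℤ) :
    shiftedPow q c (-L) (-k) = (shiftedPow q c L k)⁻¹ := by
  rw [shiftedPow, shiftedPow, mul_neg, Complex.exp_neg, zpow_neg, mul_inv]

lemma shiftedPow_one (hq0 : 0 < q) (L : ℂ) (k : ℤ) :
    shiftedPow q 1 L k = Complex.exp L * (q : ℂ) ^ k := by
  rw [shiftedPow, one_mul, qpow_one hq0]

lemma shiftedPow_mul_qpow_neg (c L : ℂ) (k : ℤ) :
    shiftedPow q c L k * qpow q (-c) ^ k = Complex.exp (c * L) := by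
  rw [shiftedPow, mul_assoc, ← mul_zpow, ← qpow_add, add_neg_cancel]
  simp [qpow]

lemma exp_neg_mul_zpow_neg (L : ℂ) (k : ℤ) :
    Complex.exp (-L) * (q : ℂ) ^ (-k) = (Complex.exp L * (q : ℂ) ^ k)⁻¹ := by
  rw [Complex.exp_neg, zpow_neg, mul_inv]

noncomputable def jacksonWeight (q : ℝ) (α a b L : ℂ) (k : ℤ) : ℂ :=
  shiftedPow q α L k *
    (poch q ((q : ℂ) * a⁻¹ * (Complex.exp L * (q : ℂ) ^ k)) /
      poch q (b * (Complex.exp L * (q : ℂ) ^ k)))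

lemma jacksonWeight_reflect (hq0 : 0 < q) (hq1 : q < 1) (m : ℕ) (α τ α₁ β₁ L : ℂ) (k : ℤ)
    (hb : ∀ μ : ℤ, poch q (qpow q β₁ * (Complex.exp L * (q : ℂ) ^ μ)) ≠ 0)
    (ha : poch q (qpow q α₁ * (Complex.exp (-L) * (q : ℂ) ^ (-k))) ≠ 0) :
    jacksonWeight q α (qpow q α₁) (qpow q β₁) L k =
      Complex.exp ((1 - α₁ - β₁) * L) *
          (qtheta q ((q : ℂ) * (qpow q α₁)⁻¹ * Complex.exp L) /
            qtheta q (qpow q β₁ * Complex.exp L)) *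
        (shiftedPow q (2 * τ) L k)⁻¹ ^ m *
        jacksonWeight q (1 - α₁ - β₁ - 2 * m * τ - α) (qpow q β₁) (qpow q α₁) (-L) (-k) := by
  have hq : |q| < 1 := abs_lt.mpr ⟨by linarith, hq1⟩
  rw [exp_neg_mul_zpow_neg] at ha
  rw [jacksonWeight, jacksonWeight, exp_neg_mul_zpow_neg,
    poch_div_poch_eq_reflect hq hq0.ne' (qpow_ne_zero _) (qpow_ne_zero _)
      (Complex.exp_ne_zero L) k hb ha,
    ← qpow_add, ← qpow_sub_one hq0, shiftedPow_neg_neg,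
    ← shiftedPow_mul_qpow_neg (1 - α₁ - β₁) L k]
  have hexponents : shiftedPow q α L k * shiftedPow q (2 * τ) L k ^ m *
      shiftedPow q (1 - α₁ - β₁ - 2 * m * τ - α) L k = shiftedPow q (1 - α₁ - β₁) L k := by
    rw [← shiftedPow_natCast_mul, ← shiftedPow_add, ← shiftedPow_add]
    congr 1; ring
  rw [← hexponents, show -(1 - α₁ - β₁) = α₁ + β₁ - 1 by ring, inv_pow]
  have hG := shiftedPow_ne_zero (q := q) (2 * τ) L k
  have hS := shiftedPow_ne_zero (q := q) (1 - α₁ - β₁ - 2 * m * τ - α) L k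
  generalize shiftedPow q (2 * τ) L k = G at *
  generalize shiftedPow q (1 - α₁ - β₁ - 2 * m * τ - α) L k = S at *
  field_simp

noncomputable def pairWeight (q : ℝ) (τ L M : ℂ) (k m : ℤ) : ℂ :=
  shiftedPow q (2 * τ - 1) L k *
      (poch q (qpow q (1 - τ) *
          (Complex.exp M * (q : ℂ) ^ m / (Complex.exp L * (q : ℂ) ^ k))) /
        poch q (qpow q τ * (Complex.exp M * (q : ℂ) ^ m / (Complex.exp L * (q : ℂ) ^ k)))) *
    (Complex.exp L * (q : ℂ) ^ k - Complex.exp M * (q : ℂ) ^ m)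

lemma pairWeight_reflect (hq0 : 0 < q) (hq1 : q < 1) (τ L M : ℂ) (k m : ℤ)
    (ht : ∀ μ : ℤ, poch q (qpow q τ * (Complex.exp M / Complex.exp L * (q : ℂ) ^ μ)) ≠ 0)
    (ht' : poch q (qpow q τ *
      (Complex.exp (-M) * (q : ℂ) ^ (-m) / (Complex.exp (-L) * (q : ℂ) ^ (-k)))) ≠ 0) :
    pairWeight q τ L M k m =
      -(shiftedPow q (2 * τ) L k * shiftedPow q (2 * τ) M m) *
        (Complex.exp ((2 * τ - 1) * L) * Complex.exp ((1 - 2 * τ) * M) *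
          (qtheta q ((q : ℂ) * (qpow q τ)⁻¹ * Complex.exp M / Complex.exp L) /
            qtheta q (qpow q τ * Complex.exp M / Complex.exp L))) *
        pairWeight q τ (-L) (-M) (-k) (-m) := by
  have hq : |q| < 1 := abs_lt.mpr ⟨by linarith, hq1⟩
  have hqc : (q : ℂ) ≠ 0 := by exact_mod_cast hq0.ne'
  have hY : Complex.exp M * (q : ℂ) ^ m / (Complex.exp L * (q : ℂ) ^ k) =
      Complex.exp M / Complex.exp L * (q : ℂ) ^ (m - k) := by
    rw [zpow_sub₀ hqc]; ring
  have hY' : Complex.exp (-M) * (q : ℂ) ^ (-m) / (Complex.exp (-L) * (q : ℂ) ^ (-k)) =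
      (Complex.exp M / Complex.exp L * (q : ℂ) ^ (m - k))⁻¹ := by
    rw [exp_neg_mul_zpow_neg, exp_neg_mul_zpow_neg, ← hY, inv_div, div_inv_eq_mul, inv_mul_eq_div]
  have hqτ : qpow q (1 - τ) = (q : ℂ) * (qpow q τ)⁻¹ := by
    rw [sub_eq_add_neg, qpow_add, qpow_one hq0, qpow, qpow, neg_mul, Complex.exp_neg]
  have hP : qpow q τ * qpow q τ / q = qpow q (2 * τ - 1) := by
    rw [qpow_sub_one hq0, two_mul, qpow_add]
  have hG : ∀ L k, shiftedPow q (2 * τ) L k =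
      shiftedPow q (2 * τ - 1) L k * (Complex.exp L * (q : ℂ) ^ k) := by
    intro L k
    rw [← shiftedPow_one hq0, ← shiftedPow_add, sub_add_cancel]
  have hF : Complex.exp ((1 - 2 * τ) * M) = (Complex.exp ((2 * τ - 1) * M))⁻¹ := by
    rw [← Complex.exp_neg]; ring_nf
  rw [hY'] at ht'
  rw [pairWeight, pairWeight, hY, hY', hqτ, mul_div_assoc, mul_div_assoc,
    poch_div_poch_eq_reflect hq hq0.ne' (qpow_ne_zero _) (qpow_ne_zero _)
      (div_ne_zero (Complex.exp_ne_zero M) (Complex.exp_ne_zero L)) (m - k) ht ht',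
    exp_neg_mul_zpow_neg, exp_neg_mul_zpow_neg, shiftedPow_neg_neg, hP, hG L k, hG M m, hF,
    zpow_sub₀ (qpow_ne_zero _)]
  simp only [shiftedPow]
  have hP0 := qpow_ne_zero (q := q) (2 * τ - 1)
  field_simp
  ring

section PairProducts

variable {n : ℕ}

lemma prod_prod_Ioi_eq_prod_pow {M : Type*} [CommMonoid M] (f : Fin n → M) :
    ∏ i, ∏ j ∈ Finset.Ioi i, f j = ∏ j, f j ^ (j : ℕ) := by
  rw [Finset.prod_comm' (t' := Finset.univ) (s' := fun j => Finset.Iio j)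
    (by intro i j; simp [and_comm])]
  exact Finset.prod_congr rfl fun j _ => by rw [Finset.prod_const, Fin.card_Iio]

lemma prod_prod_Ioi_mul_eq_prod_pow {M : Type*} [CommMonoid M] (g : Fin n → M) :
    ∏ i, ∏ j ∈ Finset.Ioi i, g i * g j = ∏ i, g i ^ (n - 1) := by
  simp only [Finset.prod_mul_distrib, Finset.prod_const, Fin.card_Ioi,
    prod_prod_Ioi_eq_prod_pow]
  rw [← Finset.prod_mul_distrib]
  exact Finset.prod_congr rfl fun i _ => by rw [← pow_add, Nat.sub_add_cancel (by omega)]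

lemma prod_prod_Ioi_const {M : Type*} [CommMonoid M] (c : M) :
    ∏ i : Fin n, ∏ _j ∈ Finset.Ioi i, c = c ^ n.choose 2 := by
  rw [prod_prod_Ioi_eq_prod_pow, Finset.prod_pow_eq_pow_sum, Fin.sum_univ_eq_sum_range (· : ℕ → ℕ),
    Finset.sum_range_id, Nat.choose_two_right]

lemma prod_mul_prod_prod_Ioi_eq_of_reflect {K : Type*} [Field K] (A A' θA g : Fin n → K)
    (B B' θB : Fin n → Fin n → K) (hg : ∀ i, g i ≠ 0)
    (hA : ∀ i, A i = θA i * (g i)⁻¹ ^ (n - 1) * A' i)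
    (hB : ∀ i j, i < j → B i j = -(g i * g j) * θB i j * B' i j) :
    (∏ i, A i) * ∏ i, ∏ j ∈ Finset.Ioi i, B i j =
      (-1) ^ n.choose 2 * (∏ i, θA i) * (∏ i, ∏ j ∈ Finset.Ioi i, θB i j) *
        ((∏ i, A' i) * ∏ i, ∏ j ∈ Finset.Ioi i, B' i j) := by
  have hB' : ∀ i, ∀ j ∈ Finset.Ioi i, B i j = (-1) * (g i * g j) * θB i j * B' i j :=
    fun i j hj => by rw [hB i j (Finset.mem_Ioi.mp hj)]; ring
  rw [Finset.prod_congr rfl fun i _ => hA i, Finset.prod_congr rfl fun i _ =>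
    Finset.prod_congr rfl (hB' i)]
  have hpairs := prod_prod_Ioi_mul_eq_prod_pow g
  simp only [Finset.prod_mul_distrib, prod_prod_Ioi_const, inv_pow,
    Finset.prod_inv_distrib] at hpairs ⊢
  have : ∏ i, g i ^ (n - 1) ≠ 0 := Finset.prod_ne_zero_iff.mpr fun i _ => pow_ne_zero _ (hg i)
  field_simp
  rw [← hpairs]
  ring

end PairProducts

lemma Apsi_eq_prod_jacksonWeight_mul (q : ℝ) (n : ℕ) (α τ a b : ℂ) (l : Fin n → ℂ)
    (ν : Fin n → ℤ) :
    Apsi q n α τ a b l ν = (∏ i, jacksonWeight q α a b (l i) (ν i)) *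
      ∏ i, ∏ j ∈ Finset.Ioi i, pairWeight q τ (l i) (l j) (ν i) (ν j) := by
  rw [Apsi, mul_assoc, ← Finset.prod_mul_distrib]
  exact congrArg _ (Finset.prod_congr rfl fun i _ => Finset.prod_mul_distrib.symm)

lemma AWellDef.poch_ne_zero {n : ℕ} {τ b : ℂ} {l : Fin n → ℂ} (h : AWellDef q n τ b l)
    (i : Fin n) (μ : ℤ) : poch q (b * (Complex.exp (l i) * (q : ℂ) ^ μ)) ≠ 0 :=
  (h fun _ => μ).1 i

lemma AWellDef.poch_pair_ne_zero {n : ℕ} {τ b : ℂ} {l : Fin n → ℂ} (h : AWellDef q n τ b l)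
    {i j : Fin n} (hij : i < j) (μ : ℤ) :
    poch q (qpow q τ * (Complex.exp (l j) / Complex.exp (l i) * (q : ℂ) ^ μ)) ≠ 0 := by
  have := (h (Pi.single j μ)).2 i j hij
  rwa [Pi.single_eq_same, Pi.single_eq_of_ne hij.ne, zpow_zero, mul_one,
    ← div_mul_eq_mul_div] at this

lemma Apsi_eq_mul_Apsi_neg (hq0 : 0 < q) (hq1 : q < 1) {n : ℕ} {α τ α₁ β₁ : ℂ}
    {l : Fin n → ℂ} (hwd : AWellDef q n τ (qpow q β₁) l)
    (hwd' : AWellDef q n τ (qpow q α₁) (fun i => -l i)) (ν : Fin n → ℤ) :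
    Apsi q n α τ (qpow q α₁) (qpow q β₁) l ν =
      (-1 : ℂ) ^ n.choose 2 *
        (∏ i : Fin n,
          Complex.exp ((1 - α₁ - β₁) * l i) *
            (qtheta q ((q : ℂ) * (qpow q α₁)⁻¹ * Complex.exp (l i)) /
              qtheta q (qpow q β₁ * Complex.exp (l i)))) *
        (∏ j : Fin n, ∏ k ∈ Finset.Ioi j,
          Complex.exp ((2 * τ - 1) * l j) * Complex.exp ((1 - 2 * τ) * l k) *
            (qtheta q ((q : ℂ) * (qpow q τ)⁻¹ * Complex.exp (l k) / Complex.exp (l j)) /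
              qtheta q (qpow q τ * Complex.exp (l k) / Complex.exp (l j)))) *
        Apsi q n (1 - α₁ - β₁ - 2 * ((n : ℂ) - 1) * τ - α) τ (qpow q β₁) (qpow q α₁)
          (fun i => -l i) (-ν) := by
  rw [Apsi_eq_prod_jacksonWeight_mul, Apsi_eq_prod_jacksonWeight_mul]
  refine prod_mul_prod_prod_Ioi_eq_of_reflect _ _ _ (fun i => shiftedPow q (2 * τ) (l i) (ν i))
    _ _ _ (fun i => shiftedPow_ne_zero _ _ _) (fun i => ?_) (fun i j hij => ?_)
  · have hA := jacksonWeight_reflect hq0 hq1 (n - 1) α τ α₁ β₁ (l i) (ν i)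
      (hwd.poch_ne_zero i) ((hwd' (-ν)).1 i)
    rwa [Nat.cast_pred i.pos] at hA
  · exact pairWeight_reflect hq0 hq1 τ (l i) (l j) (ν i) (ν j) (hwd.poch_pair_ne_zero hij)
      ((hwd' (-ν)).2 i j hij)

end

/-- The dual integral `Ī(x⁻¹)` is `AInt` with `(α, a₁, b₁)` replaced by
`(1 - α₁ - β₁ - 2 (n - 1) τ - α, b₁, a₁)`, at the logarithms `-l i` of `x i⁻¹`. -/
theorem statement12_general (q : ℝ) (hq0 : 0 < q) (hq1 : q < 1) (n : ℕ)
    (α τ α₁ β₁ : ℂ)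
    (l : Fin n → ℂ)
    (hwd : AWellDef q n τ (qpow q β₁) l)
    (hwd' : AWellDef q n τ (qpow q α₁) (fun i => -l i)) :
    AInt q n α τ (qpow q α₁) (qpow q β₁) l =
      (-1 : ℂ) ^ n.choose 2 *
        (∏ i : Fin n,
          Complex.exp ((1 - α₁ - β₁) * l i) *
            (qtheta q ((q : ℂ) * (qpow q α₁)⁻¹ * Complex.exp (l i)) /
              qtheta q (qpow q β₁ * Complex.exp (l i)))) *
        (∏ j : Fin n, ∏ k ∈ Finset.Ioi j,
          Complex.exp ((2 * τ - 1) * l j) * Complex.exp ((1 - 2 * τ) * l k) *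
            (qtheta q ((q : ℂ) * (qpow q τ)⁻¹ * Complex.exp (l k) / Complex.exp (l j)) /
              qtheta q (qpow q τ * Complex.exp (l k) / Complex.exp (l j)))) *
        AInt q n (1 - α₁ - β₁ - 2 * ((n : ℂ) - 1) * τ - α) τ (qpow q β₁) (qpow q α₁)
          (fun i => -l i) := by
  rw [AInt, AInt, tsum_congr (Apsi_eq_mul_Apsi_neg hq0 hq1 hwd hwd'), tsum_mul_left,
    tsum_comp_neg]
  ring

/-- Lemma 3.14: the reflective equation relating the A-type Jackson integral `I(x)` and its
dual `Ī(x⁻¹)`.  Here `a₁ = q^{α₁}`, `b₁ = q^{β₁}`, `s = 1-α₁-β₁-2(n-1)τ-α`, the dual summand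
`Ψ̄_y(ν)` is `Apsi q n s τ b₁ a₁`, and the branch of `x i ⁻¹` is given by `-(l i)`. -/
theorem statement12 (q : ℝ) (hq0 : 0 < q) (hq1 : q < 1) (n : ℕ) (hn : 1 ≤ n)
    (α τ α₁ β₁ : ℂ)
    (hconv : ∀ i : Fin n,
      ‖(q : ℂ) * (qpow q α₁)⁻¹ * (qpow q β₁)⁻¹‖ <
          ‖qpow q α * qpow q τ ^ (2 * (i : ℕ))‖ ∧
      ‖qpow q α * qpow q τ ^ (2 * (i : ℕ))‖ < 1)
    (l : Fin n → ℂ)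
    (hwd : AWellDef q n τ (qpow q β₁) l)
    (hwd' : AWellDef q n τ (qpow q α₁) (fun i => -l i))
    (hsum : Summable fun ν : Fin n → ℤ => Apsi q n α τ (qpow q α₁) (qpow q β₁) l ν)
    (hsum' : Summable fun ν : Fin n → ℤ =>
      Apsi q n (1 - α₁ - β₁ - 2 * ((n : ℂ) - 1) * τ - α) τ (qpow q β₁) (qpow q α₁)
        (fun i => -l i) ν) :
    AInt q n α τ (qpow q α₁) (qpow q β₁) l =
      (-1 : ℂ) ^ n.choose 2 *
        (∏ i : Fin n,
          Complex.exp ((1 - α₁ - β₁) * l i) *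
            (qtheta q ((q : ℂ) * (qpow q α₁)⁻¹ * Complex.exp (l i)) /
              qtheta q (qpow q β₁ * Complex.exp (l i)))) *
        (∏ j : Fin n, ∏ k ∈ Finset.Ioi j,
          Complex.exp ((2 * τ - 1) * l j) * Complex.exp ((1 - 2 * τ) * l k) *
            (qtheta q ((q : ℂ) * (qpow q τ)⁻¹ * Complex.exp (l k) / Complex.exp (l j)) /
              qtheta q (qpow q τ * Complex.exp (l k) / Complex.exp (l j)))) *
        AInt q n (1 - α₁ - β₁ - 2 * ((n : ℂ) - 1) * τ - α) τ (qpow q β₁) (qpow q α₁)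
          (fun i => -l i) :=
  statement12_general q hq0 hq1 n α τ α₁ β₁ l hwd hwd'
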